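/- Let f_{l}^L : [0,T] × U → ℝ be defined from a continuous bounded function h : [0,T] × U → ℝ with |h| ≤ C₀ by: f_l^L(t,u) = h(t,u) for t ≤ τ_l, f_l^L(t,u) = 0 for t ≥ τ_{l+1}, and linear interpolation in t on [τ_l, τ_{l+1}], where τ_l = Tl/L. Then f_l^L is continuous and for every finite measure α on [0,T]×U whose time-marginal is Lebesgue measure, |∫_{[0,T]×U} f_l^L dα - ∫_{[0,τ]×U} h dα| ≤ C₀ T/L for every τ ∈ [τ_l, τ_{l+1}]. -/

import Mathlib

open MeasureTheory

theorem stmt17 {U : Type*} [MetricSpace U] [CompactSpace U]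
    [MeasurableSpace U] [BorelSpace U]
    (T C₀ : ℝ) (hT : 0 < T) (L : ℕ) (hL : 0 < L) (l : ℕ) (hl : l + 1 ≤ L)
    (h : ℝ × U → ℝ) (hh : Continuous h) (hhb : ∀ p, |h p| ≤ C₀)
    (τl τl1 : ℝ) (hτl : τl = T * l / L) (hτl1 : τl1 = T * (l + 1) / L)
    (f : ℝ × U → ℝ)
    (hf : f = fun p => if p.1 ≤ τl then h p
      else if τl1 ≤ p.1 then 0 else h p * ((τl1 - p.1) / (τl1 - τl)))
    (α : Measure (ℝ × U)) [IsFiniteMeasure α]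
    (hmarg : ∀ Γ : Set ℝ, MeasurableSet Γ → Γ ⊆ Set.Icc 0 T →
      α (Γ ×ˢ (Set.univ : Set U)) = volume Γ)
    (hsupp : α ((Set.Icc 0 T ×ˢ (Set.univ : Set U))ᶜ) = 0) :
    Continuous f ∧
      ∀ τ ∈ Set.Icc τl τl1,
        |(∫ p, f p ∂α) - ∫ p in Set.Icc 0 τ ×ˢ (Set.univ : Set U), h p ∂α|
          ≤ C₀ * T / L := by
  have hLpos : (0:ℝ) < (L:ℝ) := by exact_mod_cast hL
  have hdiff : τl1 - τl = T / L := by rw [hτl, hτl1]; field_simp; ring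
  have hdpos : (0:ℝ) < τl1 - τl := by rw [hdiff]; positivity
  have hτl0 : 0 ≤ τl := by rw [hτl]; positivity
  have hτl1T : τl1 ≤ T := by
    rw [hτl1, div_le_iff₀ hLpos]
    have h1 : (l:ℝ) + 1 ≤ L := by exact_mod_cast hl
    nlinarith [hT.le]
  set φ : ℝ → ℝ := fun t => min 1 (max 0 ((τl1 - t) / (τl1 - τl))) with hφ
  have hφ01 : ∀ t, 0 ≤ φ t ∧ φ t ≤ 1 := fun t =>
    ⟨le_min zero_le_one (le_max_left _ _), min_le_left _ _⟩
  have hfφ : f = fun p => h p * φ p.1 := by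
    rw [hf]; funext p
    by_cases h1 : p.1 ≤ τl
    · rw [if_pos h1]
      have hr : 1 ≤ (τl1 - p.1) / (τl1 - τl) := (le_div_iff₀ hdpos).mpr (by linarith)
      simp only [hφ]
      rw [max_eq_right (by linarith : (0:ℝ) ≤ (τl1 - p.1) / (τl1 - τl)),
        min_eq_left hr, mul_one]
    · by_cases h2 : τl1 ≤ p.1
      · rw [if_neg h1, if_pos h2]
        have hr : (τl1 - p.1) / (τl1 - τl) ≤ 0 :=
          div_nonpos_of_nonpos_of_nonneg (by linarith) hdpos.le
        simp only [hφ]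
        rw [max_eq_left hr, min_eq_right zero_le_one, mul_zero]
      · rw [if_neg h1, if_neg h2]
        push_neg at h1 h2
        have h0r : 0 ≤ (τl1 - p.1) / (τl1 - τl) := div_nonneg (by linarith) hdpos.le
        have hr1 : (τl1 - p.1) / (τl1 - τl) ≤ 1 := (div_le_one hdpos).mpr (by linarith)
        simp only [hφ]
        rw [max_eq_right h0r, min_eq_right hr1]
  have hfc : Continuous f := by
    rw [hfφ]
    exact hh.mul ((continuous_const.min (continuous_const.max
      (((continuous_const.sub continuous_id).div_const _)))).comp continuous_fst)
  have hC₀ : 0 ≤ C₀ := by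
    cases isEmpty_or_nonempty U with
    | inl hU =>
      exfalso
      have hm := hmarg (Set.Icc 0 T) measurableSet_Icc subset_rfl
      have he : (Set.Icc 0 T ×ˢ (Set.univ : Set U)) = ∅ := Set.eq_empty_of_isEmpty _
      rw [he, measure_empty, Real.volume_Icc] at hm
      rw [eq_comm, ENNReal.ofReal_eq_zero] at hm
      linarith
    | inr hU =>
      obtain ⟨u⟩ := hU
      exact (abs_nonneg _).trans (hhb (0, u))
  have hfb : ∀ p, |f p| ≤ C₀ := by
    intro p
    rw [hfφ]
    simp only
    rw [abs_mul]
    calc |h p| * |φ p.1| ≤ C₀ * 1 := by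
          apply mul_le_mul (hhb p) _ (abs_nonneg _) hC₀
          rw [abs_of_nonneg (hφ01 p.1).1]; exact (hφ01 p.1).2
      _ = C₀ := mul_one _
  have hint_f : Integrable f α := by
    refine (integrable_const C₀).mono' hfc.aestronglyMeasurable ?_
    filter_upwards with p
    simpa [Real.norm_eq_abs] using hfb p
  have hint_h : Integrable h α := by
    refine (integrable_const C₀).mono' hh.aestronglyMeasurable ?_
    filter_upwards with p
    simpa [Real.norm_eq_abs] using hhb p
  refine ⟨hfc, ?_⟩
  intro τ hτ
  obtain ⟨hττl, hττl1⟩ := hτ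
  set S := Set.Icc 0 τ ×ˢ (Set.univ : Set U) with hS
  set strip := Set.Ioc τl τl1 ×ˢ (Set.univ : Set U) with hstrip
  have hSm : MeasurableSet S := measurableSet_Icc.prod MeasurableSet.univ
  have hstm : MeasurableSet strip := measurableSet_Ioc.prod MeasurableSet.univ
  have hint_ind : Integrable (S.indicator h) α := hint_h.indicator hSm
  rw [← integral_indicator hSm, ← integral_sub hint_f hint_ind]
  have hae : ∀ᵐ p ∂α, p ∈ Set.Icc 0 T ×ˢ (Set.univ : Set U) := by
    rw [MeasureTheory.ae_iff]
    exact measure_mono_null (fun x hx => hx) hsupp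
  have hbound : ∀ᵐ p ∂α, |f p - S.indicator h p| ≤ strip.indicator (fun _ => C₀) p := by
    filter_upwards [hae] with p hp
    have hp1 : p.1 ∈ Set.Icc 0 T := hp.1
    rw [hfφ]
    simp only
    by_cases h1 : p.1 ≤ τl
    · have hφ1 : φ p.1 = 1 := by
        have hr : 1 ≤ (τl1 - p.1) / (τl1 - τl) := (le_div_iff₀ hdpos).mpr (by linarith)
        simp only [hφ]
        rw [max_eq_right (by linarith : (0:ℝ) ≤ (τl1 - p.1) / (τl1 - τl)), min_eq_left hr]
      have hmem : p ∈ S := ⟨⟨hp1.1, h1.trans hττl⟩, trivial⟩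
      rw [Set.indicator_of_mem hmem, hφ1, mul_one, sub_self, abs_zero]
      exact Set.indicator_nonneg (fun _ _ => hC₀) p
    · by_cases h2 : τl1 < p.1
      · have hφ0 : φ p.1 = 0 := by
          have hr : (τl1 - p.1) / (τl1 - τl) ≤ 0 :=
            div_nonpos_of_nonpos_of_nonneg (by linarith) hdpos.le
          simp only [hφ]
          rw [max_eq_left hr, min_eq_right zero_le_one]
        have hnm : p ∉ S := by
          intro hm
          have : p.1 ≤ τ := hm.1.2
          linarith
        rw [Set.indicator_of_notMem hnm, hφ0, mul_zero, sub_zero, abs_zero]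
        exact Set.indicator_nonneg (fun _ _ => hC₀) p
      · push_neg at h1 h2
        have hmem : p ∈ strip := ⟨⟨h1, h2⟩, trivial⟩
        rw [Set.indicator_of_mem hmem]
        obtain ⟨hφ0, hφ1⟩ := hφ01 p.1
        by_cases h3 : p.1 ≤ τ
        · have hmS : p ∈ S := ⟨⟨hp1.1, h3⟩, trivial⟩
          rw [Set.indicator_of_mem hmS]
          have heq : h p * φ p.1 - h p = h p * (φ p.1 - 1) := by ring
          rw [heq, abs_mul]
          calc |h p| * |φ p.1 - 1| ≤ C₀ * 1 := by
                apply mul_le_mul (hhb p) _ (abs_nonneg _) hC₀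
                rw [abs_le]; constructor <;> linarith
            _ = C₀ := mul_one _
        · have hnS : p ∉ S := by
            intro hm
            exact h3 hm.1.2
          rw [Set.indicator_of_notMem hnS, sub_zero, abs_mul]
          calc |h p| * |φ p.1| ≤ C₀ * 1 := by
                apply mul_le_mul (hhb p) _ (abs_nonneg _) hC₀
                rw [abs_le]; constructor <;> linarith
            _ = C₀ := mul_one _
  have hαs : α strip = ENNReal.ofReal (T / L) := by
    rw [hstrip, hmarg (Set.Ioc τl τl1) measurableSet_Ioc
      (fun x hx => ⟨hτl0.trans hx.1.le, hx.2.trans hτl1T⟩), Real.volume_Ioc, hdiff]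
  calc |∫ p, (f p - S.indicator h p) ∂α|
      ≤ ∫ p, strip.indicator (fun _ => C₀) p ∂α := by
        rw [← Real.norm_eq_abs]
        refine (norm_integral_le_integral_norm _).trans ?_
        refine integral_mono_ae (hint_f.sub hint_ind).norm
          ((integrable_const C₀).indicator hstm) ?_
        filter_upwards [hbound] with p hp
        simpa [Real.norm_eq_abs] using hp
    _ = (α strip).toReal * C₀ := by
        rw [integral_indicator_const _ hstm, smul_eq_mul]; rfl
    _ = C₀ * T / L := by
        rw [hαs, ENNReal.toReal_ofReal (by positivity)]
        ring
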